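/- Let 𝒮 = (S_1,…,S_n) be a list of finite nonempty subsets of a finite universe U = ⋃_i S_i, and let G and c be the genome and CNP constructed from 𝒮 as described. Let E be any sequence of events (deletions and duplications) such that cnp(G⟨E⟩) = c. Then for each u ∈ U there is at least one position p of G such that G[p] = γ_u and p is unimportant with respect to E. -/

import Mathlib

/-- An event is either a deletion `del i j` (removing the substring from position `i`
to position `j`, 1-based) or a duplication `dup i j p` (copying the substring from
position `i` to position `j` and inserting the copy after position `p`). -/
inductive GEvent where
  | del (i j : ℕ)
  | dup (i j p : ℕ)
deriving DecidableEq

/-- Applying an event to a genome (a list of characters). -/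
def applyEvent {α : Type*} (G : List α) : GEvent → List α
  | .del i j => G.take (i - 1) ++ G.drop j
  | .dup i j p => G.take p ++ ((G.drop (i - 1)).take (j - i + 1)) ++ G.drop p

/-- Validity of an event on a genome: `del i j` requires `1 ≤ i ≤ j ≤ |G|`;
`dup i j p` requires `1 ≤ i ≤ j ≤ |G|` and `p ∈ {0,…,i−1} ∪ {j,…,|G|}`. -/
def GEvent.Valid {α : Type*} (G : List α) : GEvent → Prop
  | .del i j => 1 ≤ i ∧ i ≤ j ∧ j ≤ G.length
  | .dup i j p => 1 ≤ i ∧ i ≤ j ∧ j ≤ G.length ∧ (p ≤ i - 1 ∨ (j ≤ p ∧ p ≤ G.length))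

/-- `applyEvents G E` is `G⟨E⟩`, the genome obtained by successively applying
the events of `E` to `G`. -/
def applyEvents {α : Type*} (G : List α) : List GEvent → List α
  | [] => G
  | e :: E => applyEvents (applyEvent G e) E

/-- A sequence of events is valid on `G` if each event is valid on the genome
obtained by applying the previous events. -/
def ValidSeq {α : Type*} (G : List α) : List GEvent → Prop
  | [] => True
  | e :: E => e.Valid G ∧ ValidSeq (applyEvent G e) E

/-- The copy-number profile of a genome: the number of occurrences of each character. -/
def cnp {α : Type*} [DecidableEq α] (G : List α) : α → ℕ := fun s => G.count s

/-- The Genome-to-CNP distance: the minimum length of a valid event sequence turning `G`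
into a genome with CNP `c` (`⊤` if there is none). -/
noncomputable def dGCNP {α : Type*} [DecidableEq α] (G : List α) (c : α → ℕ) : ℕ∞ :=
  sInf { k : ℕ∞ | ∃ E : List GEvent,
    ValidSeq G E ∧ (E.length : ℕ∞) = k ∧ cnp (applyEvents G E) = c }

/-- The genome constructed from a SET-COVER instance: the alphabet is `Fin n ⊕ V`, where
`Sum.inl i` is the separator character `σᵢ` and `Sum.inr u` is the character `γᵤ`;
`q i` lists the elements of `S i` (each exactly once), and
`G = σ₁ q(S₁) σ₂ q(S₂) ⋯ σₙ q(Sₙ)`. -/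
def scGenome {V : Type*} (n : ℕ) (q : Fin n → List V) : List (Fin n ⊕ V) :=
  (List.finRange n).flatMap (fun i => Sum.inl i :: (q i).map Sum.inr)

/-- The CNP constructed from a SET-COVER instance: `c(σᵢ) = 1` and `c(γᵤ) = f(u) − 1`,
where `f(u)` is the number of sets of the instance containing `u`. -/
def scCNP {V : Type*} [Fintype V] [DecidableEq V] (n : ℕ) (S : Fin n → Finset V) :
    (Fin n ⊕ V) → ℕ
  | Sum.inl _ => 1
  | Sum.inr u => (Finset.univ.filter fun i => u ∈ S i).card - 1

/-- The Genome-to-Genome distance: the minimum length of a valid event sequence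
turning `G` into `G'` (`⊤` if there is none). -/
noncomputable def dGG {α : Type*} (G G' : List α) : ℕ∞ :=
  sInf { k : ℕ∞ | ∃ E : List GEvent,
    ValidSeq G E ∧ (E.length : ℕ∞) = k ∧ applyEvents G E = G' }

/-- The augmented genome of `G = g₁…gₙ`: each character is tagged with its
(1-based) position, giving the genome `(1, g₁) (2, g₂) … (n, gₙ)`. -/
def augment {α : Type*} (G : List α) : List (ℕ × α) :=
  ((List.range G.length).map (· + 1)).zip G

/-- Position `p` (1-based) of `G` is unimportant with respect to the event sequence `E`
if the character of the augmented genome tagged with `p` has no occurrence in `Ĝ⟨E⟩`. -/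
def Unimportant {α : Type*} (G : List α) (E : List GEvent) (p : ℕ) : Prop :=
  ∀ x ∈ applyEvents (augment G) E, x.1 ≠ p

/-! Events only delete or copy characters, so on the augmented genome every surviving tag `(p, G[p])`
is a character of `Ĝ`, and projecting `Ĝ⟨E⟩` to its second components gives `G⟨E⟩`. Distinct
important positions carrying `γᵤ` thus give distinct occurrences of `γᵤ` in `G⟨E⟩`; if all `f(u)`
of them were important, `γᵤ` would occur at least `f(u)` times there, but `c(γᵤ) = f(u) - 1`. -/

section

variable {α : Type*}

theorem applyEvent_subset (G : List α) (e : GEvent) : applyEvent G e ⊆ G := by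
  cases e with
  | del i j =>
    exact List.append_subset.2 ⟨List.take_subset _ _, List.drop_subset _ _⟩
  | dup i j p =>
    exact List.append_subset.2 ⟨List.append_subset.2 ⟨List.take_subset _ _,
      List.Subset.trans (List.take_subset _ _) (List.drop_subset _ _)⟩, List.drop_subset _ _⟩

theorem applyEvents_subset (G : List α) (E : List GEvent) : applyEvents G E ⊆ G := by
  induction E generalizing G with
  | nil => exact List.Subset.refl G
  | cons e E ih => exact List.Subset.trans (ih _) (applyEvent_subset G e)

theorem map_applyEvent {β : Type*} (f : α → β) (G : List α) (e : GEvent) :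
    (applyEvent G e).map f = applyEvent (G.map f) e := by
  cases e <;> simp only [applyEvent, List.map_append, List.map_take, List.map_drop]

theorem map_applyEvents {β : Type*} (f : α → β) (G : List α) (E : List GEvent) :
    (applyEvents G E).map f = applyEvents (G.map f) E := by
  induction E generalizing G with
  | nil => rfl
  | cons e E ih => simp only [applyEvents, ih, map_applyEvent]

theorem map_snd_augment (G : List α) : (augment G).map Prod.snd = G :=
  List.map_snd_zip (by simp)

theorem nodup_augment (G : List α) : (augment G).Nodup := by
  refine List.Nodup.of_map Prod.fst ?_
  rw [augment, List.map_fst_zip (by simp)]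
  exact List.nodup_range.map Nat.succ_injective

theorem getElem?_augment (G : List α) (k : ℕ) :
    (augment G)[k]? = G[k]?.map ((k + 1, ·)) := by
  rcases Nat.lt_or_ge k G.length with hk | hk <;> simp [augment, List.zip_eq_zipWith, hk]

theorem mem_augment_iff {G : List α} {x : ℕ × α} :
    x ∈ augment G ↔ 1 ≤ x.1 ∧ G[x.1 - 1]? = some x.2 := by
  simp only [List.mem_iff_getElem?, getElem?_augment, Option.map_eq_some_iff]
  constructor
  · rintro ⟨k, b, hb, rfl⟩
    exact ⟨by omega, hb⟩
  · rintro ⟨h1, h⟩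
    exact ⟨x.1 - 1, x.2, h, by ext <;> simp; omega⟩

theorem mem_applyEvents_augment_of_not_unimportant {G : List α} {E : List GEvent}
    {y : ℕ × α} (hy : y ∈ augment G) (himp : ¬ Unimportant G E y.1) :
    y ∈ applyEvents (augment G) E := by
  simp only [Unimportant, not_forall, not_not] at himp
  obtain ⟨x, hx, hxy⟩ := himp
  have hxG := (mem_augment_iff.1 (applyEvents_subset _ E hx)).2
  rw [hxy, (mem_augment_iff.1 hy).2, Option.some_inj] at hxG
  rwa [← Prod.ext hxy hxG.symm]

theorem length_filter_snd_eq_count {β : Type*} [BEq β] (L : List (α × β)) (b : β) :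
    (L.filter (·.2 == b)).length = (L.map Prod.snd).count b := by
  rw [List.count, List.countP_map, List.countP_eq_length_filter]
  rfl

theorem exists_unimportant_of_cnp_lt [DecidableEq α] {G : List α} {E : List GEvent} {a : α}
    (h : cnp (applyEvents G E) a < cnp G a) :
    ∃ p, 1 ≤ p ∧ p ≤ G.length ∧ G[p - 1]? = some a ∧ Unimportant G E p := by
  by_contra! hcon
  have hsub : (augment G).filter (·.2 == a) ⊆ (applyEvents (augment G) E).filter (·.2 == a) := by
    intro y hy
    rw [List.mem_filter, beq_iff_eq] at hy ⊢
    obtain ⟨hp, hget⟩ := mem_augment_iff.1 hy.1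
    rw [hy.2] at hget
    obtain ⟨hlt, -⟩ := List.getElem?_eq_some_iff.1 hget
    exact ⟨mem_applyEvents_augment_of_not_unimportant hy.1 (hcon _ hp (by omega) hget), hy.2⟩
  have hle := ((nodup_augment G).filter _).length_le_of_subset hsub
  rw [length_filter_snd_eq_count, length_filter_snd_eq_count, map_applyEvents,
    map_snd_augment] at hle
  exact absurd hle (not_le.2 h)

/- Phrased with `cnp` so that `List.count` uses the `BEq` instance derived from `DecidableEq`;
on `Fin n ⊕ V`, instance search for the `List.count` lemmas would find `Sum.instBEq` instead. -/
theorem cnp_map_of_injective {β : Type*} [DecidableEq α] [DecidableEq β] {f : α → β}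
    (hf : f.Injective) (G : List α) (a : α) : cnp (G.map f) (f a) = cnp G a :=
  List.count_map_of_injective G f hf a

theorem cnp_cons_of_ne [DecidableEq α] {a b : α} (h : b ≠ a) (G : List α) :
    cnp (b :: G) a = cnp G a :=
  List.count_cons_of_ne h

theorem cnp_scGenome_inr {V : Type*} [DecidableEq V] {n : ℕ} {S : Fin n → Finset V}
    {q : Fin n → List V} (hq : ∀ i, (q i).Nodup) (hqmem : ∀ i u, u ∈ q i ↔ u ∈ S i) (u : V) :
    cnp (scGenome n q) (Sum.inr u) = (Finset.univ.filter fun i => u ∈ S i).card := by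
  have hblock : ∀ i, cnp (Sum.inl i :: (q i).map Sum.inr) (Sum.inr u) =
      if u ∈ S i then 1 else 0 := by
    intro i
    rw [cnp_cons_of_ne Sum.inl_ne_inr, cnp_map_of_injective Sum.inr_injective, cnp, (hq i).count]
    simp only [hqmem]
  simp only [cnp, scGenome, List.count_flatMap, Finset.card_filter, Fin.sum_univ_def]
  exact congrArg List.sum (List.map_congr_left fun i _ => hblock i)

end

theorem exists_unimportant_position_general
    {V : Type*} [Fintype V] [DecidableEq V] (n : ℕ) (S : Fin n → Finset V)
    (hU : ∀ u : V, ∃ i, u ∈ S i)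
    (q : Fin n → List V)
    (hq : ∀ i, (q i).Nodup)
    (hqmem : ∀ i u, u ∈ q i ↔ u ∈ S i)
    (E : List GEvent)
    (hcnp : cnp (applyEvents (scGenome n q) E) = scCNP n S) :
    ∀ u : V, ∃ p : ℕ, 1 ≤ p ∧ p ≤ (scGenome n q).length ∧
      (scGenome n q)[p - 1]? = some (Sum.inr u) ∧
      Unimportant (scGenome n q) E p := by
  intro u
  apply exists_unimportant_of_cnp_lt
  obtain ⟨i, hi⟩ := hU u
  have hpos : 0 < (Finset.univ.filter fun j => u ∈ S j).card :=
    Finset.card_pos.2 ⟨i, Finset.mem_filter.2 ⟨Finset.mem_univ i, hi⟩⟩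
  rw [hcnp, cnp_scGenome_inr hq hqmem, scCNP]
  omega

/-- Claim 1 in the proof of Lemma 4 of the paper: let `G`, `c` be the
genome and CNP constructed from the SET-COVER instance `S₁, …, Sₙ` (nonempty finite sets
covering the finite universe `V`), and let `E` be any valid sequence of events with
`cnp(G⟨E⟩) = c`.  Then for each element `u` of the universe there is at least one
(1-based) position `p` of `G` carrying the character `γᵤ = Sum.inr u` that is
unimportant with respect to `E`. -/
theorem exists_unimportant_position
    {V : Type*} [Fintype V] [DecidableEq V] (n : ℕ) (S : Fin n → Finset V)
    (hne : ∀ i, (S i).Nonempty)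
    (hU : ∀ u : V, ∃ i, u ∈ S i)
    (q : Fin n → List V)
    (hq : ∀ i, (q i).Nodup)
    (hqmem : ∀ i u, u ∈ q i ↔ u ∈ S i)
    (E : List GEvent)
    (hvalid : ValidSeq (scGenome n q) E)
    (hcnp : cnp (applyEvents (scGenome n q) E) = scCNP n S) :
    ∀ u : V, ∃ p : ℕ, 1 ≤ p ∧ p ≤ (scGenome n q).length ∧
      (scGenome n q)[p - 1]? = some (Sum.inr u) ∧
      Unimportant (scGenome n q) E p :=
  exists_unimportant_position_general n S hU q hq hqmem E hcnp
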